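/- Suppose a mechanism P_{Y|Xⁿ} on finite alphabets satisfies ε-MI-DP, i.e. for every joint probability mass function P_{Xⁿ} and every index i, I(X_i; Y | X^{−i}) ≤ ε nats. Then the mechanism satisfies (0, √(2ε))-differential privacy: for all neighboring datasets x, x̃ and all S ⊆ 𝒴, P_{Y|Xⁿ}(S|x) ≤ P_{Y|Xⁿ}(S|x̃) + √(2ε). -/

import Mathlib

/-!
Put the uniform prior on two neighbouring datasets `x, x̃` differing in coordinate `i`. Given
`X^{−i}`, the coordinate `X_i` is then a fair coin choosing between `x` and `x̃`, so
`I(X_i; Y | X^{−i})` is the Jensen–Shannon divergence of `P = P_{Y|x}` and `P̃ = P_{Y|x̃}`: the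
average of `KL(P ‖ M)` and `KL(P̃ ‖ M)` for the midpoint `M`. By Pinsker's inequality (the binary
case by calculus, the general case by the log-sum inequality on `S` and its complement) each of
these is at least `2 (P(S) − M(S))² = (P(S) − P̃(S))² / 2`, hence `(P(S) − P̃(S))² ≤ 2ε`.
-/

open Real
open scoped BigOperators

/-- Two datasets are neighbors if they differ in exactly one coordinate. -/
def Neighbor {n : ℕ} {𝒳 : Fin n → Type*} (x x' : ∀ i, 𝒳 i) : Prop :=
  ∃ i, x i ≠ x' i ∧ ∀ j, j ≠ i → x j = x' j

/-- The conditional mutual information `I(X_i; Y | X^{−i})` (in nats) of the joint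
distribution of `(Xⁿ, Y)` induced by a prior pmf `μ` on datasets and a mechanism
(channel) `Q = P_{Y|Xⁿ}`; here `X^{−i}` denotes all dataset coordinates except the
`i`-th.  The inner logarithm is `log (P(y|x) / P(y | x^{−i}))`. -/
noncomputable def condMI {n : ℕ} {𝒳 : Fin n → Type*} [∀ i, Fintype (𝒳 i)]
    {𝒴 : Type*} [Fintype 𝒴]
    (μ : (∀ i, 𝒳 i) → ℝ) (Q : (∀ i, 𝒳 i) → 𝒴 → ℝ) (i : Fin n) : ℝ :=
  ∑ x, ∑ y, μ x * Q x y *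
    log ((Q x y * ∑ a, μ (Function.update x i a)) /
      (∑ a, μ (Function.update x i a) * Q (Function.update x i a) y))

theorem sum_mul_log_div_sum_le {ι : Type*} (s : Finset ι) {a b : ι → ℝ}
    (ha : ∀ i ∈ s, 0 ≤ a i) (hb : ∀ i ∈ s, 0 ≤ b i) (hab : ∀ i ∈ s, b i = 0 → a i = 0) :
    (∑ i ∈ s, a i) * log ((∑ i ∈ s, a i) / ∑ i ∈ s, b i) ≤
      ∑ i ∈ s, a i * log (a i / b i) := by
  rcases (Finset.sum_nonneg hb).eq_or_lt with hB | hB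
  · have hb0 := (Finset.sum_eq_zero_iff_of_nonneg hb).1 hB.symm
    rw [← hB, div_zero, log_zero, mul_zero]
    exact (Finset.sum_eq_zero fun i hi => by simp [hb0 i hi]).ge
  have hwp : ∀ i ∈ s, b i / (∑ j ∈ s, b j) * (a i / b i) = a i / ∑ j ∈ s, b j := fun i hi => by
    rcases eq_or_ne (b i) 0 with h | h
    · simp [h, hab i hi h]
    · field_simp
  have hJensen := convexOn_mul_log.map_sum_le (t := s) (w := fun i => b i / ∑ j ∈ s, b j)
    (p := fun i => a i / b i) (fun i hi => div_nonneg (hb i hi) hB.le)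
    (by rw [← Finset.sum_div, div_self hB.ne'])
    (fun i hi => Set.mem_Ici.2 (div_nonneg (ha i hi) (hb i hi)))
  simp only [smul_eq_mul, ← mul_assoc] at hJensen
  rwa [Finset.sum_congr rfl hwp, ← Finset.sum_div,
    Finset.sum_congr rfl fun i hi => congrArg (· * _) (hwp i hi),
    Finset.sum_congr rfl fun i _ => div_mul_eq_mul_div .., ← Finset.sum_div,
    div_mul_eq_mul_div, div_le_div_iff_of_pos_right hB] at hJensen

noncomputable def binaryKL (p q : ℝ) : ℝ :=
  p * log (p / q) + (1 - p) * log ((1 - p) / (1 - q))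

theorem binaryKL_self (p : ℝ) : binaryKL p p = 0 := by
  simp [binaryKL]

theorem binaryKL_one_sub (p q : ℝ) : binaryKL (1 - p) (1 - q) = binaryKL p q := by
  simp only [binaryKL, sub_sub_cancel]
  ring

theorem mul_log_div (x : ℝ) {y : ℝ} (hy : y ≠ 0) : x * log (x / y) = x * log x - x * log y := by
  rcases eq_or_ne x 0 with rfl | hx
  · simp
  · rw [log_div hx hy, mul_sub]

theorem two_mul_sq_sub_le_binaryKL_of_le {p q : ℝ} (hp : 0 ≤ p) (hpq : p ≤ q) (hq0 : 0 < q)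
    (hq1 : q < 1) : 2 * (p - q) ^ 2 ≤ binaryKL p q := by
  -- `binaryKL p s - 2 (p - s) ^ 2` up to a constant, written without `log (p / s)` so that it
  -- stays continuous at `s = p = 0`.
  set g : ℝ → ℝ := fun s => -(p * log s) - (1 - p) * log (1 - s) - 2 * (p - s) ^ 2
  have hcont : ContinuousOn g (Set.Icc p q) := by
    have hlog : ContinuousOn (fun s => p * log s) (Set.Icc p q) := by
      rcases hp.eq_or_lt with rfl | hp
      · simpa using continuousOn_const
      · exact continuousOn_const.mul
          (continuousOn_log.mono fun s hs => (hp.trans_le hs.1).ne')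
    have hlog' : ContinuousOn (fun s => log (1 - s)) (Set.Icc p q) :=
      ContinuousOn.log (by fun_prop) fun s hs => by linarith [hs.2]
    exact (hlog.neg.sub (continuousOn_const.mul hlog')).sub (by fun_prop)
  have hderiv : ∀ s ∈ Set.Ioo p q,
      HasDerivAt g ((s - p) * (1 - 2 * s) ^ 2 / (s * (1 - s))) s := by
    intro s ⟨hps, hsq⟩
    have hs0 : 0 < s := hp.trans_lt hps
    have hs1 : 0 < 1 - s := by linarith
    refine ((((hasDerivAt_log hs0.ne').const_mul p).neg.sub
      (((hasDerivAt_log hs1.ne').comp s ((hasDerivAt_id s).const_sub 1)).const_mul (1 - p))).sub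
      ((((hasDerivAt_id s).const_sub p).pow 2).const_mul 2)).congr_deriv ?_
    simp only [id, Nat.cast_ofNat]
    field_simp
    ring
  have hmono : MonotoneOn g (Set.Icc p q) := by
    refine monotoneOn_of_hasDerivWithinAt_nonneg (convex_Icc p q) hcont
      (fun s hs => (hderiv s (by simpa using hs)).hasDerivWithinAt) fun s hs => ?_
    rw [interior_Icc] at hs
    have : 0 < s := hp.trans_lt hs.1
    have : 0 < 1 - s := by linarith [hs.2]
    exact div_nonneg (mul_nonneg (by linarith [hs.1]) (sq_nonneg _)) (by positivity)
  have hgpq := hmono (Set.left_mem_Icc.2 hpq) (Set.right_mem_Icc.2 hpq) hpq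
  simp only [g, sub_self] at hgpq
  rw [binaryKL, mul_log_div p hq0.ne', mul_log_div (1 - p) (by linarith : (1 - q) ≠ 0)]
  linarith

theorem two_mul_sq_sub_le_binaryKL {p q : ℝ} (hp0 : 0 ≤ p) (hp1 : p ≤ 1) (hq0 : 0 < q)
    (hq1 : q < 1) : 2 * (p - q) ^ 2 ≤ binaryKL p q := by
  rcases le_total p q with h | h
  · exact two_mul_sq_sub_le_binaryKL_of_le hp0 h hq0 hq1
  · have := two_mul_sq_sub_le_binaryKL_of_le (p := 1 - p) (q := 1 - q)
      (by linarith) (by linarith) (by linarith) (by linarith)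
    rw [binaryKL_one_sub] at this
    linarith

section Discrete

variable {ι : Type*} [Fintype ι]

noncomputable def discreteKL (P M : ι → ℝ) : ℝ :=
  ∑ i, P i * log (P i / M i)

noncomputable def discreteJS (P P' : ι → ℝ) : ℝ :=
  (discreteKL P (fun i => (P i + P' i) / 2) + discreteKL P' (fun i => (P i + P' i) / 2)) / 2

theorem sum_compl_eq_one_sub [DecidableEq ι] {f : ι → ℝ} (hf : ∑ i, f i = 1) (s : Finset ι) :
    ∑ i ∈ sᶜ, f i = 1 - ∑ i ∈ s, f i := by
  rw [← hf, ← Finset.sum_add_sum_compl s f, add_sub_cancel_left]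

theorem binaryKL_le_discreteKL {P M : ι → ℝ} (hP : ∀ i, 0 ≤ P i) (hM : ∀ i, 0 ≤ M i)
    (hP1 : ∑ i, P i = 1) (hM1 : ∑ i, M i = 1) (hPM : ∀ i, M i = 0 → P i = 0) (s : Finset ι) :
    binaryKL (∑ i ∈ s, P i) (∑ i ∈ s, M i) ≤ discreteKL P M := by
  classical
  rw [discreteKL, ← Finset.sum_add_sum_compl s, binaryKL, ← sum_compl_eq_one_sub hP1,
    ← sum_compl_eq_one_sub hM1]
  exact add_le_add
    (sum_mul_log_div_sum_le s (fun i _ => hP i) (fun i _ => hM i) fun i _ => hPM i)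
    (sum_mul_log_div_sum_le sᶜ (fun i _ => hP i) (fun i _ => hM i) fun i _ => hPM i)

theorem two_mul_sq_sub_le_discreteKL {P M : ι → ℝ} (hP : ∀ i, 0 ≤ P i) (hM : ∀ i, 0 ≤ M i)
    (hP1 : ∑ i, P i = 1) (hM1 : ∑ i, M i = 1) (hPM : ∀ i, M i = 0 → P i = 0) (s : Finset ι) :
    2 * (∑ i ∈ s, P i - ∑ i ∈ s, M i) ^ 2 ≤ discreteKL P M := by
  classical
  have hKL := binaryKL_le_discreteKL hP hM hP1 hM1 hPM s
  have hnull : ∀ t : Finset ι, ∑ i ∈ t, M i = 0 → ∑ i ∈ t, P i = 0 := fun t ht =>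
    Finset.sum_eq_zero fun i hi =>
      hPM i ((Finset.sum_eq_zero_iff_of_nonneg fun j _ => hM j).1 ht i hi)
  have hp0 : 0 ≤ ∑ i ∈ s, P i := Finset.sum_nonneg fun i _ => hP i
  have hq0 : 0 ≤ ∑ i ∈ s, M i := Finset.sum_nonneg fun i _ => hM i
  have hp1 : ∑ i ∈ s, P i ≤ 1 := hP1 ▸ Finset.sum_le_univ_sum_of_nonneg hP
  have hq1 : ∑ i ∈ s, M i ≤ 1 := hM1 ▸ Finset.sum_le_univ_sum_of_nonneg hM
  by_cases hq : 0 < ∑ i ∈ s, M i ∧ ∑ i ∈ s, M i < 1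
  · exact (two_mul_sq_sub_le_binaryKL hp0 hp1 hq.1 hq.2).trans hKL
  push Not at hq
  -- `M(s) ∈ {0, 1}`, and absolute continuity forces `P(s) = M(s)`.
  have hpq : ∑ i ∈ s, P i = ∑ i ∈ s, M i := by
    rcases hq0.eq_or_lt with hq0 | hq0
    · rw [← hq0, hnull s hq0.symm]
    · have hc := hnull sᶜ (by rw [sum_compl_eq_one_sub hM1]; linarith [hq hq0])
      rw [sum_compl_eq_one_sub hP1] at hc
      linarith [hq hq0]
  rw [hpq, binaryKL_self] at hKL
  rwa [hpq, sub_self, sq, mul_zero, mul_zero]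

theorem sq_sub_div_two_le_discreteJS {P P' : ι → ℝ} (hP : ∀ i, 0 ≤ P i) (hP' : ∀ i, 0 ≤ P' i)
    (hP1 : ∑ i, P i = 1) (hP'1 : ∑ i, P' i = 1) (s : Finset ι) :
    (∑ i ∈ s, P i - ∑ i ∈ s, P' i) ^ 2 / 2 ≤ discreteJS P P' := by
  have hM : ∀ i, 0 ≤ (P i + P' i) / 2 := fun i => by linarith [hP i, hP' i]
  have hM1 : ∑ i, (P i + P' i) / 2 = 1 := by
    rw [← Finset.sum_div, Finset.sum_add_distrib, hP1, hP'1]; norm_num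
  have hMs : ∑ i ∈ s, (P i + P' i) / 2 = (∑ i ∈ s, P i + ∑ i ∈ s, P' i) / 2 := by
    rw [← Finset.sum_div, Finset.sum_add_distrib]
  have hKL := two_mul_sq_sub_le_discreteKL hP hM hP1 hM1
    (fun i h => by linarith [hP i, hP' i]) s
  have hKL' := two_mul_sq_sub_le_discreteKL hP' hM hP'1 hM1
    (fun i h => by linarith [hP i, hP' i]) s
  rw [hMs] at hKL hKL'
  unfold discreteJS
  nlinarith

end Discrete

section PairPrior

variable {α : Type*}

open Classical in
noncomputable def pairPrior (x x' : α) (z : α) : ℝ :=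
  ((if z = x then 1 else 0) + (if z = x' then 1 else 0)) / 2

theorem pairPrior_nonneg (x x' z : α) : 0 ≤ pairPrior x x' z := by
  unfold pairPrior; positivity

theorem sum_pairPrior_mul [Fintype α] (x x' : α) (G : α → ℝ) :
    ∑ z, pairPrior x x' z * G z = (G x + G x') / 2 := by
  classical
  simp [pairPrior, add_mul, div_mul_eq_mul_div, ← Finset.sum_div, Finset.sum_add_distrib]

theorem sum_pairPrior [Fintype α] (x x' : α) : ∑ z, pairPrior x x' z = 1 := by
  simpa using sum_pairPrior_mul x x' 1

theorem sum_pairPrior_update_mul {n : ℕ} {𝒳 : Fin n → Type*} [∀ i, Fintype (𝒳 i)]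
    {x x' z : ∀ i, 𝒳 i} {i : Fin n} (hx : ∀ j ≠ i, z j = x j) (hx' : ∀ j ≠ i, z j = x' j)
    (F : (∀ i, 𝒳 i) → ℝ) :
    ∑ a, pairPrior x x' (Function.update z i a) * F (Function.update z i a) =
      (F x + F x') / 2 := by
  classical
  have hupd : ∀ w, (∀ j ≠ i, z j = w j) → ∀ a, Function.update z i a = w ↔ a = w i :=
    fun w hw a => by rw [Function.update_eq_iff, and_iff_left hw]
  simp [pairPrior, hupd x hx, hupd x' hx', (hupd x hx _).2 rfl, (hupd x' hx' _).2 rfl, add_mul,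
    div_mul_eq_mul_div, ← Finset.sum_div, Finset.sum_add_distrib]

end PairPrior

theorem condMI_pairPrior {n : ℕ} {𝒳 : Fin n → Type*} [∀ i, Fintype (𝒳 i)] {𝒴 : Type*}
    [Fintype 𝒴] (Q : (∀ i, 𝒳 i) → 𝒴 → ℝ) {x x' : ∀ i, 𝒳 i} {i : Fin n}
    (hxx' : ∀ j ≠ i, x j = x' j) :
    condMI (pairPrior x x') Q i = discreteJS (Q x) (Q x') := by
  have hKL : ∀ z : ∀ i, 𝒳 i, (∀ j ≠ i, z j = x j) → (∀ j ≠ i, z j = x' j) →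
      ∑ y, Q z y * log (Q z y * (∑ a, pairPrior x x' (Function.update z i a)) /
        ∑ a, pairPrior x x' (Function.update z i a) * Q (Function.update z i a) y) =
      discreteKL (Q z) (fun y => (Q x y + Q x' y) / 2) := by
    intro z hx hx'
    have hA : ∑ a, pairPrior x x' (Function.update z i a) = 1 := by
      simpa using sum_pairPrior_update_mul hx hx' 1
    have hB : ∀ y, ∑ a, pairPrior x x' (Function.update z i a) * Q (Function.update z i a) y =
        (Q x y + Q x' y) / 2 := fun y => sum_pairPrior_update_mul hx hx' (Q · y)
    simp only [hA, hB, mul_one, discreteKL]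
  unfold condMI
  simp_rw [mul_assoc, ← Finset.mul_sum]
  rw [sum_pairPrior_mul, hKL x (fun _ _ => rfl) hxx', hKL x' (fun j hj => (hxx' j hj).symm)
    (fun _ _ => rfl), discreteJS]

theorem delta_dp_of_mi_dp {n : ℕ} {𝒳 : Fin n → Type*} [∀ i, Fintype (𝒳 i)]
    {𝒴 : Type*} [Fintype 𝒴]
    (Q : (∀ i, 𝒳 i) → 𝒴 → ℝ) (ε : ℝ)
    (hQ0 : ∀ x y, 0 ≤ Q x y) (hQ1 : ∀ x, ∑ y, Q x y = 1)
    (hMIDP : ∀ (μ : (∀ i, 𝒳 i) → ℝ), (∀ x, 0 ≤ μ x) → (∑ x, μ x = 1) →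
      ∀ i, condMI μ Q i ≤ ε) :
    ∀ x xt, Neighbor x xt → ∀ S : Finset 𝒴,
      ∑ y ∈ S, Q x y ≤ (∑ y ∈ S, Q xt y) + Real.sqrt (2 * ε) := by
  rintro x xt ⟨i, -, hagree⟩ S
  have hJS : (∑ y ∈ S, Q x y - ∑ y ∈ S, Q xt y) ^ 2 / 2 ≤ ε :=
    calc _ ≤ discreteJS (Q x) (Q xt) :=
          sq_sub_div_two_le_discreteJS (hQ0 x) (hQ0 xt) (hQ1 x) (hQ1 xt) S
      _ = condMI (pairPrior x xt) Q i := (condMI_pairPrior Q hagree).symm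
      _ ≤ ε := hMIDP _ (pairPrior_nonneg x xt) (sum_pairPrior x xt) i
  have hsqrt := abs_le_sqrt (by linarith : (∑ y ∈ S, Q x y - ∑ y ∈ S, Q xt y) ^ 2 ≤ 2 * ε)
  linarith [le_abs_self (∑ y ∈ S, Q x y - ∑ y ∈ S, Q xt y)]
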